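/- arXiv:1507.01534 — 4 statements merged into one kernel-verified Lean document; each statement's English description precedes it below -/
import Mathlib

section
/- In the free associative algebra Q⟨x,y⟩, the subspace of polynomials f with ∂_x(f) = 0 (where ∂_x is the derivation dual to x, deleting one occurrence of x) coincides with the subalgebra generated by C_i = ad(x)^{i−1}(y) for i ≥ 1, and the C_i generate this subalgebra freely. -/
/-!
Let `∂` be the derivation of the free algebra on the `C_i` that shifts `C_i` to `C_{i+1}`, so
that `x * C(u) = C(u) * x + C(∂u)`. Then every element of `ℚ⟨x,y⟩` is uniquely a sum
`∑ C(aₙ) xⁿ`: such sums are closed under left multiplication by `x` and `y`, and the coefficients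
are recovered by letting `ℚ⟨x,y⟩` act on polynomials in a central variable `X` over the free
algebra on the `C_i`, through `x ↦ X + ∂` and `y ↦ C_1`, and applying the result to `1`.
As `∂ₓ` kills every `C_i` and `∂ₓ x = 1`, it acts on `∑ C(aₙ) xⁿ` as the formal derivative in `X`,
whose kernel in characteristic zero consists of the constants `C(a₀)`.
-/

noncomputable section

/-- `ℚ⟨x,y⟩`: the free associative algebra on two generators `x`, `y`. -/
abbrev FA := FreeAlgebra ℚ Bool

/-- The generator `x`. -/
def Xgen : FA := FreeAlgebra.ι ℚ true

/-- The generator `y`. -/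
def Ygen : FA := FreeAlgebra.ι ℚ false

/-- `C_{i+1} = ad(x)^i(y)`, i.e. `C 0 = y` and `C (i+1) = [x, C i]`. -/
def Cgen : ℕ → FA
  | 0 => Ygen
  | (i + 1) => Xgen * Cgen i - Cgen i * Xgen

/-- The algebra map from the free algebra on countably many generators sending the
`i`-th generator to `C_{i+1}`. -/
def Cmap : FreeAlgebra ℚ ℕ →ₐ[ℚ] FA := FreeAlgebra.lift ℚ (fun i => Cgen i)

section Leibniz

variable {K R : Type*} [CommSemiring K] [Ring R] [Algebra K R] {D : R →ₗ[K] R}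
  (hD : ∀ a b, D (a * b) = D a * b + a * D b)
include hD

theorem map_one_eq_zero_of_leibniz : D 1 = 0 := by
  simpa using hD 1 1

theorem map_algebraMap_eq_zero_of_leibniz (q : K) : D (algebraMap K R q) = 0 := by
  rw [Algebra.algebraMap_eq_smul_one, map_smul, map_one_eq_zero_of_leibniz hD, smul_zero]

theorem map_pow_succ_of_leibniz {x : R} (hx : D x = 1) (n : ℕ) :
    D (x ^ (n + 1)) = (n + 1) • x ^ n := by
  induction n with
  | zero => simp [hx]
  | succ n ih =>
    rw [pow_succ, hD, ih, hx, smul_mul_assoc, ← pow_succ, mul_one, ← succ_nsmul]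

end Leibniz

namespace FreeAlgebra

variable {R κ : Type*} [CommRing R]

/-- `a ↦ a + ε d(a)` is an algebra map into the square-zero extension, so its `ε`-part `d` obeys
the Leibniz rule. -/
def liftLeibniz (f : κ → FreeAlgebra R κ) : FreeAlgebra R κ →ₗ[R] FreeAlgebra R κ where
  toFun a := (lift R (fun i => TrivSqZeroExt.inl (ι R i) + TrivSqZeroExt.inr (f i)) a).snd
  map_add' a b := by simp
  map_smul' r a := by simp

variable (f : κ → FreeAlgebra R κ)

theorem fst_lift_inl_add_inr (a : FreeAlgebra R κ) :
    (lift R (fun i => TrivSqZeroExt.inl (ι R i) + TrivSqZeroExt.inr (f i)) a).fst = a := by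
  have : (TrivSqZeroExt.fstHom R _ _).comp
      (lift R fun i => TrivSqZeroExt.inl (ι R i) + TrivSqZeroExt.inr (f i)) = AlgHom.id R _ :=
    hom_ext (funext fun i => by simp)
  exact DFunLike.congr_fun this a

theorem liftLeibniz_mul (a b : FreeAlgebra R κ) :
    liftLeibniz f (a * b) = liftLeibniz f a * b + a * liftLeibniz f b := by
  simp only [liftLeibniz, LinearMap.coe_mk, AddHom.coe_mk, map_mul, TrivSqZeroExt.snd_mul,
    fst_lift_inl_add_inr]
  simp [add_comm]

@[simp]
theorem liftLeibniz_ι (i : κ) : liftLeibniz f (ι R i) = f i := by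
  simp [liftLeibniz]

end FreeAlgebra

open Polynomial

namespace Polynomial

variable {K R : Type*} [CommSemiring K] [Semiring R] [Algebra K R]

def mapCoeffsLinear (g : R →ₗ[K] R) : R[X] →ₗ[K] R[X] :=
  lsum fun n => (monomial n).restrictScalars K ∘ₗ g

@[simp]
theorem mapCoeffsLinear_monomial (g : R →ₗ[K] R) (n : ℕ) (a : R) :
    mapCoeffsLinear g (monomial n a) = monomial n (g a) := by
  simp [mapCoeffsLinear]

theorem mapCoeffsLinear_C_mul {D : R →ₗ[K] R} (hD : ∀ a b, D (a * b) = D a * b + a * D b)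
    (a : R) (p : R[X]) :
    mapCoeffsLinear D (C a * p) = C a * mapCoeffsLinear D p + C (D a) * p := by
  induction p using Polynomial.induction_on' with
  | add p q hp hq => simp only [mul_add, map_add, hp, hq]; abel
  | monomial n b => simp only [C_mul_monomial, mapCoeffsLinear_monomial, hD, map_add, add_comm]

end Polynomial

abbrev FreeC := FreeAlgebra ℚ ℕ

def succDeriv : FreeC →ₗ[ℚ] FreeC := FreeAlgebra.liftLeibniz fun i => FreeAlgebra.ι ℚ (i + 1)

theorem succDeriv_mul (a b : FreeC) : succDeriv (a * b) = succDeriv a * b + a * succDeriv b :=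
  FreeAlgebra.liftLeibniz_mul _ a b

@[simp]
theorem succDeriv_ι (i : ℕ) : succDeriv (FreeAlgebra.ι ℚ i) = FreeAlgebra.ι ℚ (i + 1) :=
  FreeAlgebra.liftLeibniz_ι _ i

@[simp]
theorem Cmap_ι (i : ℕ) : Cmap (FreeAlgebra.ι ℚ i) = Cgen i := by
  simp [Cmap]

theorem Xgen_mul_Cmap (u : FreeC) : Xgen * Cmap u = Cmap u * Xgen + Cmap (succDeriv u) := by
  induction u using FreeAlgebra.induction with
  | grade0 q =>
    rw [map_algebraMap_eq_zero_of_leibniz succDeriv_mul, map_zero, add_zero, AlgHom.commutes]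
    exact (Algebra.commutes q Xgen).symm
  | grade1 i =>
    simp only [succDeriv_ι, Cmap_ι, Cgen]
    abel
  | mul a b ha hb =>
    rw [map_mul, ← mul_assoc, ha, succDeriv_mul, map_add, map_mul, map_mul, add_mul, mul_assoc,
      hb]
    noncomm_ring
  | add a b ha hb =>
    simp only [map_add, mul_add, add_mul, ha, hb]
    abel

/-- Left multiplication in the differential polynomial ring `FreeC[X; succDeriv]`, where
`X * a = a * X + succDeriv a`; by `Xgen_mul_Cmap` it matches multiplication in `FA`. -/
def polyRep : FA →ₐ[ℚ] Module.End ℚ FreeC[X] :=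
  FreeAlgebra.lift ℚ fun b => if b then LinearMap.mulLeft ℚ X + mapCoeffsLinear succDeriv
    else LinearMap.mulLeft ℚ (C (FreeAlgebra.ι ℚ 0))

theorem polyRep_Xgen : polyRep Xgen = LinearMap.mulLeft ℚ X + mapCoeffsLinear succDeriv := by
  simp [polyRep, Xgen]

theorem polyRep_Cgen (i : ℕ) :
    polyRep (Cgen i) = LinearMap.mulLeft ℚ (C (FreeAlgebra.ι ℚ i)) := by
  induction i with
  | zero => simp [polyRep, Cgen, Ygen]
  | succ i ih =>
    ext p : 1
    have hX : X * (C (FreeAlgebra.ι ℚ i) * p) = C (FreeAlgebra.ι ℚ i) * (X * p) := by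
      rw [← mul_assoc, ← mul_assoc, commute_X]
    simp only [Cgen, map_sub, map_mul, polyRep_Xgen, ih, Module.End.mul_apply, LinearMap.sub_apply,
      LinearMap.add_apply, LinearMap.mulLeft_apply, mapCoeffsLinear_C_mul succDeriv_mul, hX,
      succDeriv_ι, mul_add]
    abel

theorem polyRep_Cmap_apply (u : FreeC) (p : FreeC[X]) : polyRep (Cmap u) p = C u * p := by
  have : polyRep.comp Cmap = (Algebra.lmul ℚ FreeC[X]).comp CAlgHom :=
    FreeAlgebra.hom_ext (funext fun i => by simp [polyRep_Cgen]; rfl)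
  exact DFunLike.congr_fun (DFunLike.congr_fun this u) p

def ofPoly : FreeC[X] →ₗ[ℚ] FA :=
  lsum fun n => LinearMap.mulRight ℚ (Xgen ^ n) ∘ₗ Cmap.toLinearMap

@[simp]
theorem ofPoly_monomial (n : ℕ) (a : FreeC) : ofPoly (monomial n a) = Cmap a * Xgen ^ n := by
  simp [ofPoly]

theorem ofPoly_C (a : FreeC) : ofPoly (C a) = Cmap a := by
  rw [← monomial_zero_left, ofPoly_monomial, pow_zero, mul_one]

theorem Xgen_mul_ofPoly (p : FreeC[X]) : Xgen * ofPoly p = ofPoly (polyRep Xgen p) := by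
  induction p using Polynomial.induction_on' with
  | add p q hp hq => simp only [map_add, mul_add, hp, hq]
  | monomial n a =>
    simp only [polyRep_Xgen, LinearMap.add_apply, LinearMap.mulLeft_apply, X_mul_monomial,
      mapCoeffsLinear_monomial, map_add, ofPoly_monomial, ← mul_assoc, Xgen_mul_Cmap, add_mul,
      pow_succ']

theorem Cmap_mul_ofPoly (u : FreeC) (p : FreeC[X]) :
    Cmap u * ofPoly p = ofPoly (polyRep (Cmap u) p) := by
  rw [polyRep_Cmap_apply]
  induction p using Polynomial.induction_on' with
  | add p q hp hq => simp only [map_add, mul_add, hp, hq]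
  | monomial n a => simp only [C_mul_monomial, ofPoly_monomial, map_mul, mul_assoc]

theorem mul_ofPoly (f : FA) (p : FreeC[X]) : f * ofPoly p = ofPoly (polyRep f p) := by
  induction f using FreeAlgebra.induction generalizing p with
  | grade0 q => simp [← Algebra.smul_def, Module.algebraMap_end_apply]
  | grade1 b =>
    cases b
    · simpa [Cgen, Ygen] using Cmap_mul_ofPoly (FreeAlgebra.ι ℚ 0) p
    · exact Xgen_mul_ofPoly p
  | mul a b ha hb => rw [mul_assoc, hb, ha, map_mul, Module.End.mul_apply]
  | add a b ha hb => simp only [add_mul, ha, hb, map_add, LinearMap.add_apply]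

theorem polyRep_Xgen_pow_one (n : ℕ) : polyRep (Xgen ^ n) 1 = X ^ n := by
  induction n with
  | zero => simp
  | succ n ih =>
    rw [pow_succ', map_mul, Module.End.mul_apply, ih, polyRep_Xgen, LinearMap.add_apply,
      LinearMap.mulLeft_apply, ← monomial_one_right_eq_X_pow, mapCoeffsLinear_monomial,
      map_one_eq_zero_of_leibniz succDeriv_mul, map_zero, add_zero, X_mul_monomial,
      monomial_one_right_eq_X_pow]

theorem polyRep_ofPoly_one (p : FreeC[X]) : polyRep (ofPoly p) 1 = p := by
  induction p using Polynomial.induction_on' with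
  | add p q hp hq => simp only [map_add, LinearMap.add_apply, hp, hq]
  | monomial n a =>
    rw [ofPoly_monomial, map_mul, Module.End.mul_apply, polyRep_Xgen_pow_one, polyRep_Cmap_apply,
      C_mul_X_pow_eq_monomial]

def polyEquiv : FreeC[X] ≃ₗ[ℚ] FA :=
  { ofPoly with
    invFun f := polyRep f 1
    left_inv := polyRep_ofPoly_one
    right_inv f := by
      show ofPoly (polyRep f 1) = f
      rw [← mul_ofPoly, ← C_1, ofPoly_C, map_one, mul_one] }

@[simp]
theorem polyEquiv_apply (p : FreeC[X]) : polyEquiv p = ofPoly p := rfl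

section

variable {D : FA →ₗ[ℚ] FA} (hD : ∀ a b : FA, D (a * b) = D a * b + a * D b)
  (hDx : D Xgen = 1) (hDy : D Ygen = 0)
include hD hDx hDy

theorem map_Cgen_eq_zero (i : ℕ) : D (Cgen i) = 0 := by
  induction i with
  | zero => exact hDy
  | succ i ih =>
    rw [Cgen, map_sub, hD, hD, hDx, ih]
    noncomm_ring

theorem map_Cmap_eq_zero (u : FreeC) : D (Cmap u) = 0 := by
  induction u using FreeAlgebra.induction with
  | grade0 q => rw [AlgHom.commutes, map_algebraMap_eq_zero_of_leibniz hD]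
  | grade1 i => rw [Cmap_ι, map_Cgen_eq_zero hD hDx hDy]
  | mul a b ha hb => rw [map_mul, hD, ha, hb, zero_mul, mul_zero, add_zero]
  | add a b ha hb => rw [map_add, map_add, ha, hb, add_zero]

theorem map_ofPoly (p : FreeC[X]) : D (ofPoly p) = ofPoly (derivative p) := by
  induction p using Polynomial.induction_on' with
  | add p q hp hq => simp only [map_add, hp, hq]
  | monomial n a =>
    rw [ofPoly_monomial, hD, map_Cmap_eq_zero hD hDx hDy, zero_mul, zero_add, derivative_monomial]
    cases n with
    | zero => simp [map_one_eq_zero_of_leibniz hD]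
    | succ n => simp [map_pow_succ_of_leibniz hD hDx, mul_assoc]

end

/-- for the derivation `∂ₓ` of `ℚ⟨x,y⟩` with `∂ₓ(x) = 1`, `∂ₓ(y) = 0`, the
subspace `ker ∂ₓ` coincides with the subalgebra generated by the `C_i = ad(x)^{i−1}(y)`,
and the `C_i` generate it freely. -/
theorem kernel_of_del_x_is_free_on_C (D : FA →ₗ[ℚ] FA)
    (hD : ∀ a b : FA, D (a * b) = D a * b + a * D b)
    (hDx : D Xgen = 1) (hDy : D Ygen = 0) :
    Function.Injective Cmap ∧ Set.range Cmap = {f : FA | D f = 0} := by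
  have hCmap (a : FreeC) : Cmap a = polyEquiv (C a) := (ofPoly_C a).symm
  refine ⟨fun a b hab => ?_, Set.ext fun f => ⟨?_, fun hf => ?_⟩⟩
  · rw [hCmap, hCmap] at hab
    exact C_injective (polyEquiv.injective hab)
  · rintro ⟨u, rfl⟩
    exact map_Cmap_eq_zero hD hDx hDy u
  · obtain ⟨p, rfl⟩ := polyEquiv.surjective f
    have hp : derivative p = 0 := polyEquiv.injective <| by
      rw [map_zero, polyEquiv_apply, ← map_ofPoly hD hDx hDy]
      exact hf
    have := IsAddTorsionFree.of_module_rat FreeC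
    exact ⟨p.coeff 0, by rw [hCmap, ← eq_C_of_derivative_eq_zero hp]⟩

end
end

section
/- If a mould A with values in a commutative Q-algebra is alternal (all its shuffle sums vanish: Σ_{w ∈ sh(u,v)} A(w) = 0 for all nonempty words u,v), then A is mantar-invariant: A(w_1,...,w_r) = (−1)^{r−1} A(w_r,...,w_1) for all r ≥ 1. -/
/-- The list of all shuffles (with multiplicity) of two words. -/
def shuffles {α : Type*} : List α → List α → List (List α)
  | [], ys => [ys]
  | x :: xs, [] => [x :: xs]
  | x :: xs, y :: ys =>
      ((shuffles xs (y :: ys)).map (x :: ·)) ++ ((shuffles (x :: xs) ys).map (y :: ·))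
termination_by u v => u.length + v.length

/-- an alternal mould (with values in a commutative `ℚ`-algebra and
vanishing on the empty word) is `mantar`-invariant:
`A(w₁,…,w_r) = (−1)^(r−1) A(w_r,…,w₁)`. -/
theorem alternal_mould_is_mantar_invariant {α : Type*} {R : Type*} [CommRing R] [Algebra ℚ R]
    (A : List α → R) (hA0 : A [] = 0)
    (halt : ∀ u v : List α, u ≠ [] → v ≠ [] → ((shuffles u v).map A).sum = 0) :
    ∀ w : List α, w ≠ [] → A w = (-1 : R) ^ (w.length - 1) * A w.reverse := by
  have key : ∀ (s : List α) (c : α) (p : List α),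
      ((shuffles p s).map (fun t => A (c :: t))).sum
        = (-1 : R) ^ s.length * A (s.reverse ++ c :: p) := by
    intro s
    induction s with
    | nil =>
        intro c p
        have h : shuffles p ([] : List α) = [p] := by
          cases p <;> simp [shuffles]
        simp [h]
    | cons b s' ih =>
        intro c p
        have h0 := halt (c :: p) (b :: s') (by simp) (by simp)
        have hsh : shuffles (c :: p) (b :: s')
            = ((shuffles p (b :: s')).map (c :: ·)) ++ ((shuffles (c :: p) s').map (b :: ·)) := by
          simp [shuffles]
        rw [hsh] at h0
        simp only [List.map_append, List.map_map, List.sum_append, Function.comp_def] at h0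
        have h1 : ((shuffles p (b :: s')).map (fun t => A (c :: t))).sum
            = -((shuffles (c :: p) s').map (fun t => A (b :: t))).sum :=
          eq_neg_of_add_eq_zero_left h0
        rw [h1, ih b (c :: p)]
        simp [pow_succ]
  intro w hw
  cases w with
  | nil => exact absurd rfl hw
  | cons c s =>
      have h := key s c []
      have hsh : shuffles ([] : List α) s = [s] := by cases s <;> simp [shuffles]
      rw [hsh] at h
      simpa using h
end

section
/- For any bimould A ∈ BARI, the operator amit(A) is a derivation for the mu-multiplication of bimoulds: amit(A)·mu(B,C) = mu(amit(A)·B, C) + mu(B, amit(A)·C) for all B, C ∈ BARI. -/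
/-- A bimould: a function of words whose letters are pairs `wᵢ = (uᵢ, vᵢ)` of complex numbers. -/
abbrev Bimould := List (ℂ × ℂ) → ℂ

/-- All decompositions of a word `w` into three (possibly empty) consecutive blocks. -/
def decomp3 {α : Type*} (w : List α) : List (List α × List α × List α) :=
  (List.range (w.length + 1)).flatMap (fun i =>
    (List.range (w.length - i + 1)).map (fun j =>
      (w.take i, (w.drop i).take j, (w.drop i).drop j)))

namespace Bimould

/-- The flexion `a⌈c`: the first `u`-variable of `c` absorbs the `u`-variables of `b`. -/
def flexAC (a b c : List (ℂ × ℂ)) : List (ℂ × ℂ) :=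
  match c with
  | [] => a
  | ch :: ct => a ++ ((b.map Prod.fst).sum + ch.1, ch.2) :: ct

/-- The flexion `b⌋`: subtract the first `v`-variable of `c` from all `v`-variables of `b`. -/
def flexBr (b c : List (ℂ × ℂ)) : List (ℂ × ℂ) :=
  b.map (fun p => (p.1, p.2 - (c.headD (0, 0)).2))

/-- Mould multiplication `mu`. -/
def mu (M N : Bimould) : Bimould := fun w =>
  ((List.range (w.length + 1)).map (fun i => M (w.take i) * N (w.drop i))).sum

/-- The operator `amit(B)` applied to `A`:
`(amit(B)·A)(w) = Σ_{w = abc, b ≠ ∅, c ≠ ∅} A(a⌈c) B(b⌋)`. -/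
noncomputable def amit (B A : Bimould) : Bimould := fun w =>
  ((decomp3 w).map (fun d =>
    if d.2.1 ≠ [] ∧ d.2.2 ≠ [] then A (flexAC d.1 d.2.1 d.2.2) * B (flexBr d.2.1 d.2.2)
    else 0)).sum

end Bimould


/-!
Write every sum over a word as a sum over its splits `w = x ++ y`. A split of the flexed word
`a⌈c` (with `c ≠ []`) either cuts inside `a`, leaving `a₂⌈c` on the right, or cuts `c = c₁ ++ c₂`
with `c₁ ≠ []`, leaving `a⌈c₁` on the left; and `b⌋c = b⌋c₁` since `b⌋c` only sees the first
letter of `c`. So each summand `mu(B,C)(a⌈c) · A(b⌋c)` of the left side splits into a summand of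
`mu(B, amit(A)·C)` and one of `mu(amit(A)·B, C)`, and associativity of splitting
(`x ++ (y ++ z) = (x ++ y) ++ z`) regroups the sums.
-/

namespace List

variable {α M : Type*}

def splits (w : List α) : List (List α × List α) :=
  (range (w.length + 1)).map fun i => (w.take i, w.drop i)

theorem splits_nil : splits ([] : List α) = [([], [])] := rfl

theorem splits_cons (x : α) (w : List α) :
    splits (x :: w) = ([], x :: w) :: (splits w).map fun p => (x :: p.1, p.2) := by
  simp [splits, range_succ_eq_map, Function.comp_def]

theorem append_of_mem_splits {w : List α} {p : List α × List α} (h : p ∈ splits w) :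
    p.1 ++ p.2 = w := by
  obtain ⟨i, -, rfl⟩ := mem_map.1 h
  exact take_append_drop i w

section AddCommMonoid

variable [AddCommMonoid M]

def sumSplits (w : List α) (f : List α → List α → M) : M :=
  ((splits w).map fun p => f p.1 p.2).sum

theorem sumSplits_nil (f : List α → List α → M) : sumSplits [] f = f [] [] := by
  simp [sumSplits, splits_nil]

theorem sumSplits_cons (x : α) (w : List α) (f : List α → List α → M) :
    sumSplits (x :: w) f = f [] (x :: w) + sumSplits w fun y z => f (x :: y) z := by
  simp [sumSplits, splits_cons, Function.comp_def]

theorem sumSplits_congr {w : List α} {f g : List α → List α → M}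
    (h : ∀ y z, y ++ z = w → f y z = g y z) : sumSplits w f = sumSplits w g :=
  congrArg sum <| map_congr_left fun p hp => h p.1 p.2 (append_of_mem_splits hp)

theorem sumSplits_eq_zero {w : List α} {f : List α → List α → M}
    (h : ∀ y z, y ++ z = w → f y z = 0) : sumSplits w f = 0 :=
  (sumSplits_congr h).trans sum_map_zero

theorem sumSplits_add (w : List α) (f g : List α → List α → M) :
    sumSplits w (fun y z => f y z + g y z) = sumSplits w f + sumSplits w g :=
  sum_map_add

theorem sumSplits_comm {β : Type*} (u : List α) (v : List β)
    (f : List α → List α → List β → List β → M) :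
    sumSplits u (fun y z => sumSplits v (f y z)) =
      sumSplits v fun y' z' => sumSplits u fun y z => f y z y' z' := by
  simpa [sumSplits] using
    Multiset.sum_map_sum_map (splits u : Multiset (List α × List α))
      (splits v : Multiset (List β × List β)) (f := fun p q => f p.1 p.2 q.1 q.2)

theorem sumSplits_assoc (w : List α) (f : List α → List α → List α → M) :
    sumSplits w (fun x z => sumSplits x fun x₁ x₂ => f x₁ x₂ z) =
      sumSplits w fun x y => sumSplits y (f x) := by
  induction w generalizing f with
  | nil => simp [sumSplits_nil]
  | cons a w ih =>
    simp only [sumSplits_cons, sumSplits_nil, sumSplits_add, ih fun x₁ => f (a :: x₁)]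
    abel

/-- The split `(a, c)` is counted in the first sum only. -/
theorem sumSplits_append (a c : List α) (f : List α → List α → M) :
    sumSplits (a ++ c) f =
      sumSplits a (fun y z => f y (z ++ c)) +
        sumSplits c fun y z => if y = [] then 0 else f (a ++ y) z := by
  induction a generalizing f with
  | nil =>
    cases c with
    | nil => simp [sumSplits_nil]
    | cons x c => simp [sumSplits_cons, sumSplits_nil]
  | cons x a ih =>
    simp only [cons_append, sumSplits_cons, ih fun y z => f (x :: y) z, add_assoc]

end AddCommMonoid

section Semiring

variable [NonUnitalNonAssocSemiring M]

theorem sumSplits_mul_left (w : List α) (r : M) (f : List α → List α → M) :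
    sumSplits w (fun y z => r * f y z) = r * sumSplits w f :=
  sum_map_mul_left _ _ r

theorem sumSplits_mul_right (w : List α) (r : M) (f : List α → List α → M) :
    sumSplits w (fun y z => f y z * r) = sumSplits w f * r :=
  sum_map_mul_right _ _ r

end Semiring

end List

namespace Bimould

open List

theorem mu_eq_sumSplits (M N : Bimould) (w : List (ℂ × ℂ)) :
    mu M N w = sumSplits w fun x y => M x * N y := by
  simp [mu, sumSplits, splits, Function.comp_def]

theorem decomp3_eq_flatMap_splits {α : Type*} (w : List α) :
    decomp3 w = (splits w).flatMap fun p => (splits p.2).map fun q => (p.1, q.1, q.2) := by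
  simp [decomp3, splits, flatMap_map, Function.comp_def]

def amitTerm (B A : Bimould) (a b c : List (ℂ × ℂ)) : ℂ :=
  if b ≠ [] ∧ c ≠ [] then A (flexAC a b c) * B (flexBr b c) else 0

theorem amit_eq_sumSplits (B A : Bimould) (w : List (ℂ × ℂ)) :
    amit B A w = sumSplits w fun a r => sumSplits r fun b c => amitTerm B A a b c := by
  simp [amit, decomp3_eq_flatMap_splits, sumSplits, amitTerm, sum_flatten, flatMap_def,
    Function.comp_def]

theorem sumSplits_flexAC {M : Type*} [AddCommMonoid M] (a b : List (ℂ × ℂ)) {c : List (ℂ × ℂ)}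
    (hc : c ≠ []) (f : List (ℂ × ℂ) → List (ℂ × ℂ) → M) :
    sumSplits (flexAC a b c) f =
      sumSplits a (fun y z => f y (flexAC z b c)) +
        sumSplits c fun y z => if y = [] then 0 else f (flexAC a b y) z := by
  obtain ⟨x, c, rfl⟩ := exists_cons_of_ne_nil hc
  simp [flexAC, sumSplits_append, sumSplits_cons]

theorem flexBr_append {b c : List (ℂ × ℂ)} (hc : c ≠ []) (d : List (ℂ × ℂ)) :
    flexBr b (c ++ d) = flexBr b c := by
  obtain ⟨x, c, rfl⟩ := exists_cons_of_ne_nil hc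
  rfl

theorem amitTerm_mu (A B C : Bimould) (a b c : List (ℂ × ℂ)) :
    amitTerm A (mu B C) a b c =
      sumSplits a (fun x y => B x * amitTerm A C y b c) +
        sumSplits c fun y z => amitTerm A B a b y * C z := by
  by_cases hbc : b ≠ [] ∧ c ≠ []
  · obtain ⟨hb, hc⟩ := hbc
    rw [amitTerm, if_pos ⟨hb, hc⟩, mu_eq_sumSplits, sumSplits_flexAC a b hc, add_mul,
      ← sumSplits_mul_right, ← sumSplits_mul_right]
    congr 1
    · simp only [amitTerm, if_pos (And.intro hb hc), mul_assoc]
    · refine sumSplits_congr fun y z hyz => ?_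
      by_cases hy : y = []
      · simp [amitTerm, hy]
      · rw [if_neg hy, amitTerm, if_pos ⟨hb, hy⟩, ← hyz, flexBr_append hy]
        ring
  · have hAC : ∀ x y, B x * amitTerm A C y b c = 0 := fun _ _ => by simp [amitTerm, hbc]
    have hAB : ∀ y z, y ++ z = c → amitTerm A B a b y * C z = 0 := by
      rintro y z rfl
      simp_all [amitTerm]
    rw [amitTerm, if_neg hbc, sumSplits_eq_zero fun x y _ => hAC x y, sumSplits_eq_zero hAB,
      add_zero]

end Bimould

theorem amit_is_mu_derivation_general (A B C : Bimould) :
    Bimould.amit A (Bimould.mu B C) =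
      Bimould.mu (Bimould.amit A B) C + Bimould.mu B (Bimould.amit A C) := by
  funext w
  open Bimould List in
  calc amit A (mu B C) w
      = sumSplits w (fun a r => sumSplits r fun b c => sumSplits c fun y z =>
            amitTerm A B a b y * C z) +
          sumSplits w (fun a r => sumSplits r fun b c => sumSplits a fun x y =>
            B x * amitTerm A C y b c) := by
        simp only [amit_eq_sumSplits, amitTerm_mu, sumSplits_add]
        exact add_comm _ _
    _ = mu (amit A B) C w + mu B (amit A C) w := by
        congr 1
        · simp only [← sumSplits_assoc, mu_eq_sumSplits, amit_eq_sumSplits, sumSplits_mul_right]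
        · simp only [sumSplits_comm _ _ (fun b c x y => B x * amitTerm A C y b c), sumSplits_assoc,
            mu_eq_sumSplits, amit_eq_sumSplits, sumSplits_mul_left]

/-- for any bimould `A ∈ BARI`, the operator `amit(A)` is a derivation
for the `mu`-multiplication of bimoulds. -/
theorem amit_is_mu_derivation (A B C : Bimould)
    (hA : A [] = 0) (hB : B [] = 0) (hC : C [] = 0) :
    Bimould.amit A (Bimould.mu B C) =
      Bimould.mu (Bimould.amit A B) C + Bimould.mu B (Bimould.amit A C) :=
  amit_is_mu_derivation_general A B C
end

section
/- The only alternal moulds concentrated in depth r whose value is a linear form a_1 u_1 + ··· + a_r u_r divided by u_1···u_r times a fixed scalar — equivalently, the only linear forms L(u) = a_1u_1+···+a_ru_r such that the mould M(u_1,...,u_r) = L(u) satisfies all shuffle relations Σ_{w∈sh(u',u'')} M(w) = 0 — are the scalar multiples of Σ_{i=1}^{r} (−1)^{i−1} binom(r−1, i−1) u_i. -/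
/-- The linear form with coefficient list `a`, as a mould: `M(u₁,…,u_r) = a₁u₁ + ⋯ + a_ru_r`. -/
def linMould (a : List ℚ) : List ℚ → ℚ := fun l => (List.zipWith (· * ·) a l).sum

open Finset

theorem length_shuffles {α : Type*} : ∀ u v : List α,
    (shuffles u v).length = (u.length + v.length).choose u.length
  | [], ys => by simp [shuffles]
  | x :: xs, [] => by simp [shuffles]
  | x :: xs, y :: ys => by
    simp only [shuffles, List.length_append, List.length_map, length_shuffles xs (y :: ys),
      length_shuffles (x :: xs) ys, List.length_cons]
    rw [show xs.length + 1 + (ys.length + 1) = xs.length + (ys.length + 1) + 1 by ring,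
      Nat.choose_succ_succ, show xs.length + 1 + ys.length = xs.length + (ys.length + 1) by ring]
termination_by u v => u.length + v.length

def linearForm (c : ℕ → ℚ) (w : List ℚ) : ℚ := ∑ j ∈ range w.length, c j * w.getD j 0

theorem linearForm_cons (c : ℕ → ℚ) (x : ℚ) (w : List ℚ) :
    linearForm c (x :: w) = c 0 * x + linearForm (fun j => c (j + 1)) w := by
  simp [linearForm, sum_range_succ', add_comm]

theorem linMould_eq_linearForm (a : List ℚ) : linMould a = linearForm (a.getD · 0) := by
  funext w
  induction w generalizing a with
  | nil => simp [linMould, linearForm]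
  | cons x w ih =>
    cases a with
    | nil => simp [linMould, linearForm]
    | cons b a =>
      simp only [linearForm_cons, List.getD_cons_zero, List.getD_cons_succ, ← ih]
      simp [linMould]

theorem sum_map_linearForm_cons (c : ℕ → ℚ) (x : ℚ) (W : List (List ℚ)) :
    (W.map fun w => linearForm c (x :: w)).sum
      = W.length * (c 0 * x) + (W.map (linearForm fun j => c (j + 1))).sum := by
  induction W with
  | nil => simp
  | cons w W ih =>
    rw [List.map_cons, List.sum_cons, ih, linearForm_cons, List.map_cons, List.sum_cons,
      List.length_cons]
    push_cast
    ring

-- `(i.choose j) * (p + q - 1 - i).choose (p - 1 - j)` counts the shuffles of a word of length `p`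
-- with one of length `q` in which the `j`-th letter of the first word lands at position `i`.
def shuffleCoeff (c : ℕ → ℚ) (p q j : ℕ) : ℚ :=
  ∑ i ∈ range (p + q), c i * i.choose j * (p + q - 1 - i).choose (p - 1 - j)

theorem shuffleCoeff_zero_right (c : ℕ → ℚ) {p j : ℕ} (hj : j < p) :
    shuffleCoeff c p 0 j = c j := by
  rw [shuffleCoeff, sum_eq_single j]
  · simp
  · intro i hi hne
    rcases hne.lt_or_gt with h | h
    · simp [Nat.choose_eq_zero_of_lt h]
    · rw [Nat.choose_eq_zero_of_lt (by have := mem_range.mp hi; omega : p + 0 - 1 - i < p - 1 - j)]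
      simp
  · simp [hj]

theorem shuffleCoeff_succ_succ_zero (c : ℕ → ℚ) (p q : ℕ) :
    shuffleCoeff c (p + 1) (q + 1) 0
      = c 0 * (p + q + 1).choose p + shuffleCoeff (fun i => c (i + 1)) (p + 1) q 0 := by
  rw [shuffleCoeff, shuffleCoeff, show p + 1 + (q + 1) = p + 1 + q + 1 by ring, sum_range_succ',
    add_comm]
  simp only [Nat.choose_zero_right]
  congr 1
  · simp [show p + 1 + q + 1 - 1 = p + q + 1 by omega]
  · refine sum_congr rfl fun i _ => ?_
    rw [show p + 1 + q + 1 - 1 - (i + 1) = p + 1 + q - 1 - i by omega]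

theorem shuffleCoeff_succ_succ_succ (c : ℕ → ℚ) {p : ℕ} (q : ℕ) {j : ℕ} (hj : j < p) :
    shuffleCoeff c (p + 1) (q + 1) (j + 1)
      = shuffleCoeff (fun i => c (i + 1)) p (q + 1) j
        + shuffleCoeff (fun i => c (i + 1)) (p + 1) q (j + 1) := by
  rw [shuffleCoeff, shuffleCoeff, shuffleCoeff, show p + 1 + (q + 1) = p + 1 + q + 1 by ring,
    sum_range_succ', show p + (q + 1) = p + 1 + q by ring, ← sum_add_distrib]
  simp only [Nat.choose_zero_succ, Nat.cast_zero, mul_zero, zero_mul, add_zero]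
  refine sum_congr rfl fun i _ => ?_
  rw [Nat.choose_succ_succ, show p + 1 + q + 1 - 1 - (i + 1) = p + 1 + q - 1 - i by omega,
    show p + 1 - 1 - (j + 1) = p - 1 - j by omega]
  push_cast
  ring

theorem shuffleCoeff_one_right (c : ℕ → ℚ) {p j : ℕ} (hj : j < p) :
    shuffleCoeff c p 1 j = (p - j : ℕ) * c j + (j + 1) * c (j + 1) := by
  rw [shuffleCoeff, sum_eq_add_of_mem j (j + 1) (mem_range.mpr (by omega))
    (mem_range.mpr (by omega)) (by omega)]
  · rw [Nat.choose_self, show p + 1 - 1 - j = p - 1 - j + 1 by omega, Nat.choose_succ_self_right,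
      Nat.choose_succ_self_right, show p + 1 - 1 - (j + 1) = p - 1 - j by omega, Nat.choose_self,
      show p - 1 - j + 1 = p - j by omega]
    push_cast
    ring
  · rintro i hi ⟨hij, hij'⟩
    rcases Nat.lt_or_gt_of_ne hij with h | h
    · simp [Nat.choose_eq_zero_of_lt h]
    · rw [Nat.choose_eq_zero_of_lt (by have := mem_range.mp hi; omega : p + 1 - 1 - i < p - 1 - j)]
      simp

def shuffleContrib (c : ℕ → ℚ) (u v : List ℚ) : ℚ :=
  ∑ j ∈ range u.length, u.getD j 0 * shuffleCoeff c u.length v.length j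

theorem shuffleContrib_nil_right (c : ℕ → ℚ) (u : List ℚ) :
    shuffleContrib c u [] = linearForm c u :=
  sum_congr rfl fun j hj => by
    rw [List.length_nil, shuffleCoeff_zero_right c (mem_range.mp hj), mul_comm]

theorem shuffleContrib_cons_cons (c : ℕ → ℚ) (x y : ℚ) (u v : List ℚ) :
    shuffleContrib c (x :: u) (y :: v)
      = (u.length + v.length + 1).choose u.length * (c 0 * x)
        + shuffleContrib (fun i => c (i + 1)) u (y :: v)
        + shuffleContrib (fun i => c (i + 1)) (x :: u) v := by
  simp only [shuffleContrib, List.length_cons]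
  rw [sum_range_succ', sum_range_succ' _ u.length, List.getD_cons_zero,
    shuffleCoeff_succ_succ_zero]
  simp only [List.getD_cons_succ]
  rw [sum_congr rfl fun j hj => by
    rw [shuffleCoeff_succ_succ_succ c _ (mem_range.mp hj), mul_add], sum_add_distrib]
  ring

theorem sum_map_linearForm_shuffles : ∀ (c : ℕ → ℚ) (u v : List ℚ),
    ((shuffles u v).map (linearForm c)).sum = shuffleContrib c u v + shuffleContrib c v u
  | c, [], v => by rw [shuffles, shuffleContrib_nil_right]; simp [shuffleContrib]
  | c, x :: u, [] => by rw [shuffles, shuffleContrib_nil_right]; simp [shuffleContrib]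
  | c, x :: u, y :: v => by
    simp only [shuffles, List.map_append, List.sum_append, List.map_map, Function.comp_def]
    rw [sum_map_linearForm_cons, sum_map_linearForm_cons, sum_map_linearForm_shuffles _ u,
      sum_map_linearForm_shuffles _ _ v, length_shuffles, length_shuffles,
      shuffleContrib_cons_cons, shuffleContrib_cons_cons]
    simp only [List.length_cons]
    have hy : (u.length + 1 + v.length).choose (u.length + 1)
        = (v.length + u.length + 1).choose v.length := by
      rw [Nat.choose_symm_of_eq_add rfl]; ring_nf
    rw [show u.length + (v.length + 1) = u.length + v.length + 1 by ring, hy]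
    ring
termination_by _ u v => u.length + v.length

theorem Nat.choose_mul_choose_sub_comm (n m t : ℕ) :
    n.choose m * (n - m).choose t = n.choose t * (n - t).choose m := by
  by_cases h : m + t ≤ n
  · have hm := Nat.choose_mul (n := n) (Nat.le_add_right m t)
    have ht := Nat.choose_mul (n := n) (Nat.le_add_left t m)
    rw [Nat.add_sub_cancel_left] at hm
    rw [Nat.add_sub_cancel_right, ← Nat.choose_symm_add] at ht
    rw [← hm, ← ht]
  · rcases le_or_gt m n with hm | hm
    · rw [Nat.choose_eq_zero_of_lt (by omega : n - m < t)]
      rcases le_or_gt t n with ht | ht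
      · rw [Nat.choose_eq_zero_of_lt (by omega : n - t < m), mul_zero, mul_zero]
      · rw [Nat.choose_eq_zero_of_lt ht, mul_zero, zero_mul]
    · rw [Nat.choose_eq_zero_of_lt hm, Nat.choose_eq_zero_of_lt (by omega : n - t < m),
        zero_mul, mul_zero]

theorem sum_range_neg_one_pow_mul_choose_eq_zero {k N : ℕ} (hk : 0 < k) (hkN : k ≤ N) :
    ∑ m ∈ range (N + 1), (-1 : ℚ) ^ m * k.choose m = 0 := by
  obtain ⟨k, rfl⟩ := Nat.exists_eq_add_one_of_ne_zero hk.ne'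
  have h := Int.alternating_sum_range_choose_eq_choose (n := k) (m := N)
  rw [Nat.choose_eq_zero_of_lt (by omega), Nat.cast_zero, mul_zero] at h
  exact_mod_cast h

theorem sum_range_neg_one_pow_mul_choose_mul_choose_mul_choose {n j t : ℕ} (h : j + t < n) :
    ∑ i ∈ range (n + 1), (-1 : ℚ) ^ i * n.choose i * i.choose j * (n - i).choose t = 0 := by
  rw [show n + 1 = j + (n - j + 1) by omega, sum_range_add, sum_eq_zero fun i hi => by
    rw [Nat.choose_eq_zero_of_lt (mem_range.mp hi), Nat.cast_zero, mul_zero, zero_mul], zero_add]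
  have hterm : ∀ m ∈ range (n - j + 1),
      (-1 : ℚ) ^ (j + m) * n.choose (j + m) * (j + m).choose j * (n - (j + m)).choose t
        = (-1) ^ j * n.choose j * (n - j).choose t * ((-1) ^ m * (n - j - t).choose m) := by
    intro m hm
    have h₁ : n.choose (j + m) * (j + m).choose j = n.choose j * (n - j).choose m := by
      rw [Nat.choose_mul (Nat.le_add_right j m), Nat.add_sub_cancel_left]
    have h₂ := Nat.choose_mul_choose_sub_comm (n - j) m t
    rw [show n - (j + m) = n - j - m by omega]
    rw [← Nat.cast_inj (R := ℚ)] at h₁ h₂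
    push_cast at h₁ h₂
    linear_combination (-1 : ℚ) ^ (j + m) * ((n - j - m).choose t : ℚ) * h₁
      + (-1 : ℚ) ^ (j + m) * (n.choose j : ℚ) * h₂
  rw [sum_congr rfl hterm, ← mul_sum, sum_range_neg_one_pow_mul_choose_eq_zero (by omega)
    (by omega), mul_zero]

theorem eq_neg_one_pow_mul_choose_of_recurrence {n : ℕ} {c : ℕ → ℚ}
    (hc : ∀ m < n, ((n - m : ℕ) : ℚ) * c m + (m + 1) * c (m + 1) = 0) :
    ∀ m ≤ n, c m = c 0 * (-1) ^ m * n.choose m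
  | 0, _ => by simp
  | m + 1, hm => by
    have ih := eq_neg_one_pow_mul_choose_of_recurrence hc m (by omega)
    have hchoose : (n.choose (m + 1) : ℚ) * (m + 1) = n.choose m * (n - m : ℕ) := by
      exact_mod_cast Nat.choose_succ_right_eq n m
    apply mul_left_cancel₀ (show (m + 1 : ℚ) ≠ 0 by positivity)
    linear_combination hc m (by omega) - ((n - m : ℕ) : ℚ) * ih
      - c 0 * (-1) ^ (m + 1) * hchoose

theorem shuffleCoeff_eq_zero_of_eq_neg_one_pow_mul_choose {c : ℕ → ℚ} {n : ℕ} (k : ℚ)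
    (hc : ∀ i ≤ n, c i = k * (-1) ^ i * n.choose i) {p q j : ℕ} (hpq : p + q = n + 1)
    (hq : 0 < q) (hj : j < p) : shuffleCoeff c p q j = 0 := by
  rw [shuffleCoeff, hpq, Nat.add_sub_cancel,
    sum_congr rfl fun i hi => by rw [hc i (Nat.lt_succ_iff.mp (mem_range.mp hi))], ← zero_mul k,
    ← sum_range_neg_one_pow_mul_choose_mul_choose_mul_choose (n := n) (j := j) (t := p - 1 - j)
      (by omega), sum_mul]
  exact sum_congr rfl fun i _ => by ring

theorem sum_map_linearForm_shuffles_eq_zero {c : ℕ → ℚ} {n : ℕ} (k : ℚ)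
    (hc : ∀ i ≤ n, c i = k * (-1) ^ i * n.choose i) {u v : List ℚ} (hu : u ≠ []) (hv : v ≠ [])
    (huv : u.length + v.length = n + 1) :
    ((shuffles u v).map (linearForm c)).sum = 0 := by
  have hu' := List.length_pos_iff.mpr hu
  have hv' := List.length_pos_iff.mpr hv
  rw [sum_map_linearForm_shuffles, shuffleContrib, shuffleContrib,
    sum_eq_zero fun j hj => by
      rw [shuffleCoeff_eq_zero_of_eq_neg_one_pow_mul_choose k hc huv hv' (mem_range.mp hj),
        mul_zero],
    sum_eq_zero fun j hj => by
      rw [shuffleCoeff_eq_zero_of_eq_neg_one_pow_mul_choose k hc (by omega) hu' (mem_range.mp hj),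
        mul_zero],
    add_zero]

theorem sum_map_linearForm_shuffles_take_drop_of_unit {c : ℕ → ℚ} {n m : ℕ} (hm : m < n)
    {x : List ℚ} (hx : x.length = n + 1) (hxm : ∀ i, x.getD i 0 = if i = m then 1 else 0) :
    ((shuffles (x.take n) (x.drop n)).map (linearForm c)).sum
      = (n - m : ℕ) * c m + (m + 1) * c (m + 1) := by
  rw [sum_map_linearForm_shuffles, ← shuffleCoeff_one_right c hm, shuffleContrib, shuffleContrib]
  simp only [List.length_take, List.length_drop, hx, Nat.add_sub_cancel_left,
    min_eq_left (Nat.le_succ n), range_one, sum_singleton]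
  have htake : ∀ j ∈ range n, (x.take n).getD j 0 = x.getD j 0 := fun j hj => by
    simp only [List.getD_eq_getElem?_getD, List.getElem?_take_of_lt (mem_range.mp hj)]
  have hdrop : (x.drop n).getD 0 0 = x.getD n 0 := by
    simp only [List.getD_eq_getElem?_getD, List.getElem?_drop, add_zero]
  rw [sum_congr rfl fun j hj => by rw [htake j hj, hxm], hdrop, hxm, if_neg hm.ne']
  simp [hm]

/-- a linear form `L(u) = a₁u₁+⋯+a_ru_r`, viewed as a mould concentrated in
depth `r`, satisfies all the shuffle (alternality) relations if and only if it is a scalar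
multiple of `Σᵢ (−1)^(i−1) C(r−1, i−1) uᵢ`. -/
theorem linear_alternal_mould_classification (r : ℕ) (a : List ℚ) (ha : a.length = r) :
    (∀ k : ℕ, 0 < k → k < r → ∀ x : List ℚ, x.length = r →
        ((shuffles (x.take k) (x.drop k)).map (linMould a)).sum = 0) ↔
    (∃ c : ℚ, a = (List.range r).map (fun i => c * (-1 : ℚ) ^ i * ((r - 1).choose i))) := by
  rw [linMould_eq_linearForm]
  constructor
  · intro h
    obtain rfl | ⟨n, rfl⟩ : r = 0 ∨ ∃ n, r = n + 1 := by cases r <;> simp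
    · exact ⟨0, by simpa using ha⟩
    have hrec : ∀ m < n, ((n - m : ℕ) : ℚ) * a.getD m 0 + (m + 1) * a.getD (m + 1) 0 = 0 := by
      intro m hm
      let e := (List.range (n + 1)).map fun i => if i = m then (1 : ℚ) else 0
      have he : ∀ i, e.getD i 0 = if i = m then 1 else 0 := fun i => by grind
      rw [← sum_map_linearForm_shuffles_take_drop_of_unit (c := (a.getD · 0)) hm (by simp [e]) he]
      exact h n (by omega) (by omega) e (by simp [e])
    refine ⟨a.getD 0 0, List.ext_getElem (by simp [ha]) fun i hi _ => ?_⟩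
    rw [List.getElem_map, List.getElem_range, ← List.getD_eq_getElem a 0]
    exact eq_neg_one_pow_mul_choose_of_recurrence hrec i (by omega)
  · rintro ⟨k, hak⟩ m hm hmr x hx
    have hc : ∀ i ≤ r - 1, a.getD i 0 = k * (-1) ^ i * (r - 1).choose i := fun i hi => by
      simp [hak, List.getD_eq_getElem?_getD, show i < r by omega]
    exact sum_map_linearForm_shuffles_eq_zero k hc
      (List.ne_nil_of_length_pos (by rw [List.length_take]; omega))
      (List.ne_nil_of_length_pos (by rw [List.length_drop]; omega))
      (by rw [List.length_take, List.length_drop]; omega)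
end
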